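/- Defining the Gelfand ideal 𝒥 = {α ∈ 𝒲 : δ(ᾱ ⋆ α) = 0}, where δ : 𝒲 → ℂ[[ħ]] takes the constant term (coefficient of y^0 ȳ^0), one has: 𝒥 is a left ideal of (𝒲, ⋆), and 𝒥 equals the set of elements of 𝒲 all of whose monomials contain at least one holomorphic variable y_i (i.e., the coefficient of ħ^k ȳ^J vanishes for all k and all J, including J = 0). Consequently 𝒲/𝒥 ≅ ℂ[[ȳ_1,...,ȳ_n]][[ħ]] as ℂ[[ħ]]-modules. -/

import Mathlib

open Finsupp MeasureTheory
open scoped Classical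

noncomputable section

/-- Multi-indices for `n` variables. -/
abbrev MI (n : ℕ) := Fin n →₀ ℕ

/-- `|I| = i₁ + ⋯ + iₙ`. -/
def mdeg {n : ℕ} (I : MI n) : ℕ := I.sum fun _ v => v

/-- `I! = i₁! ⋯ iₙ!`. -/
def mfact {n : ℕ} (I : MI n) : ℕ := I.prod fun _ v => v.factorial

/-- The Wick algebra `ℂ[[y, ȳ]][[ħ]]`, as coefficient functions:
`f (k, I, J)` is the coefficient of `ħ^k y^I ȳ^J`. -/
abbrev W (n : ℕ) := ℕ × MI n × MI n → ℂ

/-- The constant multi-index with all entries `k`. -/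
def constMI (n k : ℕ) : MI n := Finsupp.equivFunOnFinite.symm fun _ => k

/-- The Wick product
`f ⋆ g = exp(−ħ Σᵢ ∂_{yᵢ} ∂_{ȳ'ᵢ}) (f(y,ȳ) g(y',ȳ'))|_{y = y'}`, written out
coefficientwise (the inner sums are finite for each fixed coefficient). -/
def wick {n : ℕ} (f g : W n) : W n := fun x =>
  ∑ M ∈ Finset.Iic (constMI n x.1),
    if mdeg M ≤ x.1 then
      ∑ p ∈ Finset.HasAntidiagonal.antidiagonal (x.1 - mdeg M),
        ∑ i ∈ Finset.HasAntidiagonal.antidiagonal x.2.1,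
          ∑ j ∈ Finset.HasAntidiagonal.antidiagonal x.2.2,
            ((-1 : ℂ) ^ mdeg M / (mfact M : ℂ)) *
              ((mfact (i.1 + M) : ℂ) / (mfact i.1 : ℂ)) *
              ((mfact (j.2 + M) : ℂ) / (mfact j.2 : ℂ)) *
              f (p.1, i.1 + M, j.1) * g (p.2, i.2, j.2 + M)
    else 0

/-- Pointwise (classical, commutative) product of formal series. -/
def wmul {n : ℕ} (f g : W n) : W n := fun x =>
  ∑ p ∈ Finset.HasAntidiagonal.antidiagonal x.1, ∑ i ∈ Finset.HasAntidiagonal.antidiagonal x.2.1,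
    ∑ j ∈ Finset.HasAntidiagonal.antidiagonal x.2.2,
      f (p.1, i.1, j.1) * g (p.2, i.2, j.2)

/-- The monomial `c · ħ^k y^I ȳ^J`. -/
def wmono {n : ℕ} (c : ℂ) (k : ℕ) (I J : MI n) : W n :=
  fun x => if x = (k, I, J) then c else 0

/-- The unit `1` of the Wick algebra. -/
def wone (n : ℕ) : W n := wmono 1 0 0 0

/-- Pointwise powers `f^m`. -/
def wpow {n : ℕ} (f : W n) : ℕ → W n
  | 0 => wone n
  | m + 1 => wmul (wpow f m) f

/-- `f` has all of its monomials `ħ^k y^I ȳ^J` of degree `2k + |I| + |J| ≥ a`. -/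
def wdegGE {n : ℕ} (f : W n) (a : ℕ) : Prop :=
  ∀ x, f x ≠ 0 → a ≤ 2 * x.1 + mdeg x.2.1 + mdeg x.2.2

/-- The extended Wick algebra: `ħ`-exponents may be negative integers. -/
abbrev WE (n : ℕ) := ℤ × MI n × MI n → ℂ

/-- Embedding of the Wick algebra into its extension. -/
def embW {n : ℕ} (f : W n) : WE n := fun x =>
  if 0 ≤ x.1 then f (x.1.toNat, x.2) else 0

/-- Degree `2k + |I| + |J| ∈ ℤ` of a monomial in the extended Wick algebra. -/
def edeg {n : ℕ} (x : ℤ × MI n × MI n) : ℤ :=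
  2 * x.1 + (mdeg x.2.1 : ℤ) + (mdeg x.2.2 : ℤ)

/-- Pointwise product on the extended Wick algebra. -/
def emul {n : ℕ} (f g : WE n) : WE n := fun x =>
  ∑' k : ℤ, ∑ i ∈ Finset.HasAntidiagonal.antidiagonal x.2.1, ∑ j ∈ Finset.HasAntidiagonal.antidiagonal x.2.2,
    f (k, i.1, j.1) * g (x.1 - k, i.2, j.2)

/-- The Wick product on the extended Wick algebra. -/
def ewick {n : ℕ} (f g : WE n) : WE n := fun x =>
  ∑' q : ℤ × MI n, ∑ i ∈ Finset.HasAntidiagonal.antidiagonal x.2.1, ∑ j ∈ Finset.HasAntidiagonal.antidiagonal x.2.2,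
    ((-1 : ℂ) ^ mdeg q.2 / (mfact q.2 : ℂ)) *
      ((mfact (i.1 + q.2) : ℂ) / (mfact i.1 : ℂ)) *
      ((mfact (j.2 + q.2) : ℂ) / (mfact j.2 : ℂ)) *
      f (q.1, i.1 + q.2, j.1) * g (x.1 - q.1 - (mdeg q.2 : ℤ), i.2, j.2 + q.2)

/-- The unit of the extended Wick algebra. -/
def eone (n : ℕ) : WE n := fun x => if x = ((0 : ℤ), (0 : MI n), (0 : MI n)) then 1 else 0

/-- Wick (star) powers in the extended Wick algebra. -/
def epow {n : ℕ} (f : WE n) : ℕ → WE n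
  | 0 => eone n
  | m + 1 => ewick (epow f m) f

/-- The classical exponential `exp(H/ħ) = Σₘ (1/m!) Hᵐ/ħᵐ`, an element of the
extended Wick algebra. -/
def expOverHbar {n : ℕ} (H : W n) : WE n := fun x =>
  ∑' m : ℕ, ((m.factorial : ℂ))⁻¹ * embW (wpow H m) (x.1 + (m : ℤ), x.2)

/-- The star-exponential `exp^⋆(X) = Σₘ X^{⋆m}/m!`. -/
def starExp {n : ℕ} (X : WE n) : WE n := fun x =>
  ∑' m : ℕ, ((m.factorial : ℂ))⁻¹ * epow X m x

/-- The Fock space `ℂ[[y]][[ħ]]`: `s (k, I)` is the coefficient of `ħ^k y^I`. -/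
abbrev F (n : ℕ) := ℕ × MI n → ℂ

/-- The extended Fock space (negative powers of `ħ` allowed). -/
abbrev FE (n : ℕ) := ℤ × MI n → ℂ

/-- Embedding of the Fock space into its extension. -/
def embF {n : ℕ} (s : F n) : FE n := fun x =>
  if 0 ≤ x.1 then s (x.1.toNat, x.2) else 0

/-- The Bargmann-Fock action on the Fock space: the normally ordered monomial
`ħ^m y^I ȳ^J` acts as `(ħ ∂/∂y)^J ∘ m_{y^I}`, extended `ℂ[[ħ]]`-linearly. -/
def bf {n : ℕ} (f : W n) (s : F n) : F n := fun x =>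
  ∑ m ∈ Finset.range (x.1 + 1), ∑ J ∈ Finset.Iic (constMI n x.1),
    if m + mdeg J ≤ x.1 then
      ∑ I ∈ Finset.Iic (x.2 + J),
        f (m, I, J) * ((mfact (x.2 + J) : ℂ) / (mfact x.2 : ℂ)) *
          s (x.1 - m - mdeg J, x.2 + J - I)
    else 0

/-- The Bargmann-Fock action of extended Wick elements on the extended Fock space. -/
def ebf {n : ℕ} (E : WE n) (s : FE n) : FE n := fun x =>
  ∑' q : ℤ × MI n, ∑ I ∈ Finset.Iic (x.2 + q.2),
    E (q.1, I, q.2) * ((mfact (x.2 + q.2) : ℂ) / (mfact x.2 : ℂ)) *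
      s (x.1 - q.1 - (mdeg q.2 : ℤ), x.2 + q.2 - I)

/-- Complex conjugation on the Wick algebra: swaps `y^I ↔ ȳ^I` and conjugates
coefficients. -/
def conjW {n : ℕ} (f : W n) : W n := fun x => (starRingEnd ℂ) (f (x.1, x.2.2, x.2.1))

/-- The formal (oscillatory Gaussian) integral `ħ^{-n} ∫ h e^{(−|y|²+φ)/ħ}` as a
formal Laurent series in `ħ` (coefficient of `ħ^d`), defined by expanding
`e^{φ/ħ}` and applying the Wick contraction rule
`ħ^{-n} ∫ y^I ȳ^J e^{−|y|²/ħ} = δ_{IJ} I! ħ^{|I|}`. -/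
def FI {n : ℕ} (φ h : W n) : ℤ → ℂ := fun d =>
  ∑' q : ℕ × MI n,
    if 0 ≤ d + (q.1 : ℤ) - (mdeg q.2 : ℤ) then
      ((q.1.factorial : ℂ))⁻¹ * (mfact q.2 : ℂ) *
        wmul (wpow φ q.1) h ((d + (q.1 : ℤ) - (mdeg q.2 : ℤ)).toNat, q.2, q.2)
    else 0

/-- The formal inner product `⟨f, g⟩ = ħ^{-n} ∫ f ḡ e^{(−|y|²+φ)/ħ}`. -/
def ip {n : ℕ} (φ f g : W n) : ℤ → ℂ := FI φ (wmul f (conjW g))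


/-- The Gelfand ideal `𝒥 = {α ∈ 𝒲 : δ(ᾱ ⋆ α) = 0}`, where `δ` takes the
constant term (coefficient of `y^0 ȳ^0`) as an element of `ℂ[[ħ]]`. -/
def gelfandIdeal (n : ℕ) : Set (W n) :=
  {α | ∀ k : ℕ, wick (conjW α) α (k, (0 : MI n), (0 : MI n)) = 0}

/-- The quotient map `𝒲 → ℂ[[ȳ]][[ħ]]`, `α ↦ (coefficients of ħ^k ȳ^J)`. -/
def quotMap {n : ℕ} (α : W n) : F n := fun x => α (x.1, (0 : MI n), x.2)

/-- Multiplication by `ħ` on the Wick algebra. -/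
def hbarW {n : ℕ} (α : W n) : W n := fun x =>
  if 1 ≤ x.1 then α (x.1 - 1, x.2) else 0

/-- Multiplication by `ħ` on `ℂ[[ȳ]][[ħ]]`. -/
def hbarF {n : ℕ} (s : F n) : F n := fun x =>
  if 1 ≤ x.1 then s (x.1 - 1, x.2) else 0

lemma mfact_zero {n : ℕ} : mfact (0 : MI n) = 1 := by simp [mfact]
lemma mfact_pos {n : ℕ} (M : MI n) : 0 < mfact M := by
  unfold mfact Finsupp.prod
  exact Finset.prod_pos fun i _ => Nat.factorial_pos _
lemma apply_le_mdeg {n : ℕ} (M : MI n) (i : Fin n) : M i ≤ mdeg M := by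
  by_cases h : i ∈ M.support
  · exact Finset.single_le_sum (f := fun j => M j) (fun _ _ => Nat.zero_le _) h
  · simp [Finsupp.notMem_support_iff.mp h]
lemma mem_Iic_constMI {n : ℕ} {M : MI n} {k : ℕ} (h : mdeg M ≤ k) :
    M ∈ Finset.Iic (constMI n k) := by
  rw [Finset.mem_Iic, Finsupp.le_def]
  intro i
  simpa [constMI] using (apply_le_mdeg M i).trans h

lemma wick00 {n : ℕ} (f g : W n) (k : ℕ) :
    wick f g (k, (0 : MI n), (0 : MI n)) =
    ∑ M ∈ Finset.Iic (constMI n k),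
      if mdeg M ≤ k then
        ∑ p ∈ Finset.HasAntidiagonal.antidiagonal (k - mdeg M),
          ((-1 : ℂ) ^ mdeg M * (mfact M : ℂ)) * (f (p.1, M, 0) * g (p.2, 0, M))
      else 0 := by
  unfold wick
  refine Finset.sum_congr rfl fun M _ => ?_
  split_ifs with h
  · refine Finset.sum_congr rfl fun p _ => ?_
    rw [Finsupp.antidiagonal_zero, Finset.sum_singleton, Finset.sum_singleton]
    have hM : (mfact M : ℂ) ≠ 0 := by exact_mod_cast (mfact_pos M).ne'
    simp only [zero_add, mfact_zero, Nat.cast_one, div_one]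
    field_simp
  · rfl

def rval {n : ℕ} (α : W n) (N : ℕ) (M : MI n) : ℝ :=
  if mdeg M ≤ N ∧ (N - mdeg M) % 2 = 0 then
    (mfact M : ℝ) * Complex.normSq (α ((N - mdeg M) / 2, 0, M))
  else 0

lemma rval_nonneg {n : ℕ} (α : W n) (N : ℕ) (M : MI n) : 0 ≤ rval α N M := by
  unfold rval; split_ifs
  · exact mul_nonneg (Nat.cast_nonneg _) (Complex.normSq_nonneg _)
  · exact le_refl 0

lemma key_forward {n : ℕ} (α : W n)
    (h : ∀ k : ℕ, wick (conjW α) α (k, (0 : MI n), (0 : MI n)) = 0) :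
    ∀ (N : ℕ) (p : ℕ) (M : MI n), 2 * p + mdeg M ≤ N → α (p, 0, M) = 0 := by
  intro N
  induction N using Nat.strong_induction_on with
  | _ N IH =>
  intro p M hpM
  rcases lt_or_eq_of_le hpM with hlt | heq
  · exact IH (2 * p + mdeg M) hlt p M le_rfl
  -- weight exactly N
  -- define the nonneg real values
  have hIH0 : ∀ (q : ℕ) (L : MI n), 2 * q + mdeg L < N → α (q, 0, L) = 0 :=
    fun q L hq => IH (2 * q + mdeg L) hq q L le_rfl
  have hsum : wick (conjW α) α (N, (0 : MI n), (0 : MI n)) =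
      (-1 : ℂ) ^ N * (↑(∑ M ∈ Finset.Iic (constMI n N), rval α N M) : ℂ) := by
    rw [wick00, Complex.ofReal_sum, Finset.mul_sum]
    refine Finset.sum_congr rfl fun L _ => ?_
    by_cases hL : mdeg L ≤ N
    · rw [if_pos hL]
      by_cases hpar : (N - mdeg L) % 2 = 0
      · -- sum over antidiagonal reduces to diagonal term
        set p0 := (N - mdeg L) / 2 with hp0
        have hdiag : p0 + p0 = N - mdeg L := by omega
        rw [Finset.sum_eq_single (p0, p0)]
        · have hconj : conjW α (p0, L, 0) = (starRingEnd ℂ) (α (p0, 0, L)) := rfl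
          rw [hconj]
          unfold rval
          rw [if_pos ⟨hL, hpar⟩]
          have hsign : ((-1 : ℂ)) ^ mdeg L = (-1 : ℂ) ^ N := by
            have : N = mdeg L + 2 * p0 := by omega
            rw [this, pow_add, pow_mul]
            simp
          rw [hsign]
          have : (starRingEnd ℂ) (α (p0, 0, L)) * α (p0, 0, L) =
              (Complex.normSq (α (p0, 0, L)) : ℂ) := by
            rw [mul_comm, Complex.mul_conj]
          rw [this]
          push_cast
          ring
        · rintro ⟨q1, q2⟩ hq hne
          rw [Finset.HasAntidiagonal.mem_antidiagonal] at hq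
          have h1 : conjW α (q1, L, 0) = (starRingEnd ℂ) (α (q1, 0, L)) := rfl
          by_cases hc1 : 2 * q1 + mdeg L < N
          · rw [h1, hIH0 q1 L hc1]
            simp
          · have hc2 : 2 * q2 + mdeg L < N := by
              by_contra hc2
              apply hne
              obtain ⟨e1, e2⟩ : q1 = p0 ∧ q2 = p0 := by omega
              rw [e1, e2]
            rw [hIH0 q2 L hc2]
            simp
        · intro hmem
          exfalso
          exact hmem (Finset.HasAntidiagonal.mem_antidiagonal.mpr hdiag)
      · -- odd case: all terms vanish, r L = 0
        unfold rval
        rw [if_neg (by tauto), Complex.ofReal_zero, mul_zero]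
        refine Finset.sum_eq_zero fun q hq => ?_
        rw [Finset.HasAntidiagonal.mem_antidiagonal] at hq
        by_cases hc1 : 2 * q.1 + mdeg L < N
        · have h1 : conjW α (q.1, L, 0) = (starRingEnd ℂ) (α (q.1, 0, L)) := rfl
          rw [h1, hIH0 q.1 L hc1]; simp
        · have hc2 : 2 * q.2 + mdeg L < N := by omega
          rw [hIH0 q.2 L hc2]; simp
    · rw [if_neg hL]
      unfold rval
      rw [if_neg (by tauto), Complex.ofReal_zero, mul_zero]
  have hzero : ∑ M ∈ Finset.Iic (constMI n N), rval α N M = 0 := by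
    have := h N
    rw [hsum] at this
    have hne : ((-1 : ℂ)) ^ N ≠ 0 := pow_ne_zero _ (by norm_num)
    have := (mul_eq_zero.mp this).resolve_left hne
    exact_mod_cast this
  have hrM : rval α N M = 0 :=
    (Finset.sum_eq_zero_iff_of_nonneg (fun L _ => rval_nonneg α N L)).mp hzero M
      (mem_Iic_constMI (by omega))
  unfold rval at hrM
  rw [if_pos ⟨by omega, by omega⟩] at hrM
  have hp : (N - mdeg M) / 2 = p := by omega
  rw [hp] at hrM
  have : Complex.normSq (α (p, 0, M)) = 0 := by
    have hf : (0:ℝ) < (mfact M : ℝ) := by exact_mod_cast mfact_pos M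
    rcases mul_eq_zero.mp hrM with h' | h'
    · exact absurd h' hf.ne'
    · exact h'
  exact Complex.normSq_eq_zero.mp this

lemma wick_left_vanish {n : ℕ} (β α : W n) (h : ∀ (k : ℕ) (J : MI n), α (k, (0 : MI n), J) = 0) :
    ∀ (k : ℕ) (J : MI n), wick β α (k, (0 : MI n), J) = 0 := by
  intro k J
  unfold wick
  refine Finset.sum_eq_zero fun M _ => ?_
  split_ifs with hM
  · refine Finset.sum_eq_zero fun p _ => ?_
    refine Finset.sum_eq_zero fun i hi => ?_
    refine Finset.sum_eq_zero fun j _ => ?_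
    rw [Finset.HasAntidiagonal.mem_antidiagonal] at hi
    have hi2 : i.2 = 0 := by
      have := (add_eq_zero.mp hi).2
      exact this
    rw [hi2, h, mul_zero]
  · rfl

lemma gelfand_char {n : ℕ} (α : W n) :
    α ∈ gelfandIdeal n ↔ ∀ (k : ℕ) (J : MI n), α (k, (0 : MI n), J) = 0 := by
  constructor
  · intro hα k J
    exact key_forward α hα (2 * k + mdeg J) k J le_rfl
  · intro h k
    exact wick_left_vanish (conjW α) α h k 0

/-- The Gelfand ideal `𝒥` is a left ideal of `(𝒲, ⋆)`; it
equals the set of elements all of whose monomials contain at least one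
holomorphic variable; and consequently `𝒲/𝒥 ≅ ℂ[[ȳ]][[ħ]]` as
`ℂ[[ħ]]`-modules, via the (surjective, `ℂ[[ħ]]`-linear) map `quotMap` whose
kernel is exactly `𝒥`. -/
theorem gelfand_ideal_structure (n : ℕ) :
    (∀ α β : W n, α ∈ gelfandIdeal n → β ∈ gelfandIdeal n →
      α + β ∈ gelfandIdeal n) ∧
    (∀ c : ℂ, ∀ α : W n, α ∈ gelfandIdeal n → c • α ∈ gelfandIdeal n) ∧
    (∀ β α : W n, α ∈ gelfandIdeal n → wick β α ∈ gelfandIdeal n) ∧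
    (∀ α : W n, α ∈ gelfandIdeal n ↔
      ∀ (k : ℕ) (J : MI n), α (k, (0 : MI n), J) = 0) ∧
    Function.Surjective (quotMap (n := n)) ∧
    (∀ α : W n, quotMap α = 0 ↔ α ∈ gelfandIdeal n) ∧
    (∀ α β : W n, quotMap (α + β) = quotMap α + quotMap β) ∧
    (∀ (c : ℂ) (α : W n), quotMap (c • α) = c • quotMap α) ∧
    (∀ α : W n, quotMap (hbarW α) = hbarF (quotMap α)) := by
  refine ⟨?_, ?_, ?_, fun α => gelfand_char α, ?_, ?_, ?_, ?_, ?_⟩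
  · intro α β hα hβ
    rw [gelfand_char] at hα hβ ⊢
    intro k J
    show α (k, 0, J) + β (k, 0, J) = 0
    rw [hα, hβ, add_zero]
  · intro c α hα
    rw [gelfand_char] at hα ⊢
    intro k J
    show c * α (k, 0, J) = 0
    rw [hα, mul_zero]
  · intro β α hα
    rw [gelfand_char] at hα ⊢
    exact wick_left_vanish β α hα
  · intro s
    refine ⟨fun x => if x.2.1 = 0 then s (x.1, x.2.2) else 0, funext fun x => ?_⟩
    simp [quotMap]
  · intro α
    rw [gelfand_char, funext_iff]
    constructor
    · intro h k J
      exact h (k, J)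
    · intro h x
      exact h x.1 x.2
  · intro α β; rfl
  · intro c α; rfl
  · intro α; rfl


end
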